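/- arXiv:math/0307251 — 2 statements merged into one kernel-verified Lean document; each statement's English description precedes it below -/
import Mathlib

section
/- For positive integers k and m, there exists a linear map L : ℝᵏ → M_r(ℂ) (the r×r complex matrices) with L(x) invertible for every x ≠ 0, where r = m·2^{⌊(k−1)/2⌋}. (Existence direction: such L can be constructed from Clifford multiplication.) -/
/-!
We build `L` with `(L x)ᴴ * L x = L x * (L x)ᴴ = ‖x‖² • 1`, so that `L x` is invertible with
inverse `‖x‖⁻² • (L x)ᴴ` as soon as `x ≠ 0`. For `k = 1, 2` take `z • 1` with `z = x₀` or
`z = x₀ + x₁ i`, in any size. Going from `k` to `k + 2` doubles the size: with `A = L y` and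
`z = x_k + x_{k+1} i`, the block matrix `[[z • 1, -Aᴴ], [A, z̄ • 1]]` again has this property,
because the scalar blocks commute with `A` and `Aᴴ`, so the off-diagonal blocks of the product cancel.
-/

open Matrix Complex

variable {n n' : Type*} [Fintype n] [DecidableEq n] [Fintype n'] [DecidableEq n']

omit [Fintype n] in
theorem normSq_smul_one (c : ℂ) : (normSq c • 1 : Matrix n n ℂ) = (star c * c) • 1 := by
  rw [← Complex.coe_smul, normSq_eq_conj_mul_self]; rfl

def IsScaledUnitary (s : ℝ) (A : Matrix n n ℂ) : Prop :=
  Aᴴ * A = s • (1 : Matrix n n ℂ) ∧ A * Aᴴ = s • (1 : Matrix n n ℂ)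

namespace IsScaledUnitary

variable {s : ℝ} {A : Matrix n n ℂ}

theorem isUnit (hA : IsScaledUnitary s A) (hs : s ≠ 0) : IsUnit A :=
  isUnit_iff_exists.2 ⟨s⁻¹ • Aᴴ,
    by rw [mul_smul_comm, hA.2, smul_smul, inv_mul_cancel₀ hs, one_smul],
    by rw [smul_mul_assoc, hA.1, smul_smul, inv_mul_cancel₀ hs, one_smul]⟩

theorem reindex (hA : IsScaledUnitary s A) (e : n ≃ n') :
    IsScaledUnitary s (Matrix.reindex e e A) := by
  simp [IsScaledUnitary, conjTranspose_submatrix, submatrix_mul_equiv, hA.1, hA.2,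
    submatrix_smul, submatrix_one_equiv]

theorem fromBlocks (hA : IsScaledUnitary s A) (c : ℂ) :
    IsScaledUnitary (s + normSq c) (Matrix.fromBlocks (c • 1) (-Aᴴ) A (star c • 1)) := by
  have hblocks : ((s + normSq c) • 1 : Matrix (n ⊕ n) (n ⊕ n) ℂ) =
      Matrix.fromBlocks ((s + normSq c) • 1) 0 0 ((s + normSq c) • 1) := by
    rw [← fromBlocks_one, fromBlocks_smul]; simp
  rw [IsScaledUnitary, hblocks, fromBlocks_conjTranspose, fromBlocks_multiply, fromBlocks_multiply,
    fromBlocks_inj, fromBlocks_inj]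
  simp [hA.1, hA.2, add_smul, normSq_smul_one, smul_smul, mul_comm c, add_comm]

end IsScaledUnitary

theorem isScaledUnitary_smul_one (c : ℂ) : IsScaledUnitary (normSq c) (c • 1 : Matrix n n ℂ) := by
  simp only [IsScaledUnitary, conjTranspose_smul, conjTranspose_one, smul_mul_smul_comm, mul_one,
    normSq_smul_one, mul_comm c, and_self]

def IsCliffordMap {ι : Type*} [Fintype ι] (L : (ι → ℝ) →ₗ[ℝ] Matrix n n ℂ) : Prop :=
  ∀ x, IsScaledUnitary (∑ i, x i ^ 2) (L x)

noncomputable def complexCoord : (Fin 2 → ℝ) →ₗ[ℝ] ℂ :=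
  equivRealProdLm.symm.toLinearMap ∘ₗ (LinearMap.proj 0).prod (LinearMap.proj 1)

theorem normSq_complexCoord (x : Fin 2 → ℝ) : normSq (complexCoord x) = ∑ i, x i ^ 2 := by
  simp [complexCoord, normSq_apply, Fin.sum_univ_two, sq]

noncomputable def cliffordDouble {k : ℕ} (L : (Fin k → ℝ) →ₗ[ℝ] Matrix n n ℂ) :
    (Fin (k + 2) → ℝ) →ₗ[ℝ] Matrix (n ⊕ n) (n ⊕ n) ℂ where
  toFun x :=
    let A := L (LinearMap.funLeft ℝ ℝ (Fin.castAdd 2) x)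
    let c := complexCoord (LinearMap.funLeft ℝ ℝ (Fin.natAdd k) x)
    fromBlocks (c • 1) (-Aᴴ) A (star c • 1)
  map_add' x y := by
    simp only [map_add, star_add, add_smul, conjTranspose_add, neg_add, fromBlocks_add]
  map_smul' r x := by
    simp [fromBlocks_smul, ← smul_assoc]

theorem isCliffordMap_smulRight_one {ι : Type*} [Fintype ι] (φ : (ι → ℝ) →ₗ[ℝ] ℂ)
    (hφ : ∀ x, normSq (φ x) = ∑ i, x i ^ 2) : IsCliffordMap (φ.smulRight (1 : Matrix n n ℂ)) :=
  fun x => hφ x ▸ isScaledUnitary_smul_one (φ x)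

theorem IsCliffordMap.reindex {ι : Type*} [Fintype ι] {L : (ι → ℝ) →ₗ[ℝ] Matrix n n ℂ}
    (hL : IsCliffordMap L) (e : n ≃ n') :
    IsCliffordMap ((reindexLinearEquiv ℝ ℂ e e).toLinearMap ∘ₗ L) :=
  fun x => (hL x).reindex e

theorem IsCliffordMap.cliffordDouble {k : ℕ} {L : (Fin k → ℝ) →ₗ[ℝ] Matrix n n ℂ}
    (hL : IsCliffordMap L) : IsCliffordMap (cliffordDouble L) := by
  intro x
  have hsum : ∑ i, x i ^ 2 = ∑ i, LinearMap.funLeft ℝ ℝ (Fin.castAdd 2) x i ^ 2 +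
      normSq (complexCoord (LinearMap.funLeft ℝ ℝ (Fin.natAdd k) x)) := by
    rw [normSq_complexCoord, Fin.sum_univ_add]; rfl
  rw [hsum]
  exact (hL _).fromBlocks _

theorem exists_isCliffordMap (m : ℕ) : ∀ k : ℕ, ∃ L : (Fin k → ℝ) →ₗ[ℝ]
    Matrix (Fin (m * 2 ^ ((k - 1) / 2))) (Fin (m * 2 ^ ((k - 1) / 2))) ℂ, IsCliffordMap L
  | 0 => ⟨0, fun x => by simp [IsScaledUnitary]⟩
  | 1 => ⟨_, isCliffordMap_smulRight_one (ofRealCLM.toLinearMap ∘ₗ LinearMap.proj 0)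
      fun x => by simp [sq]⟩
  | 2 => ⟨_, isCliffordMap_smulRight_one complexCoord normSq_complexCoord⟩
  | k + 3 => by
    obtain ⟨L, hL⟩ := exists_isCliffordMap m (k + 1)
    have hr : m * 2 ^ (k / 2) + m * 2 ^ (k / 2) = m * 2 ^ ((k + 2) / 2) := by
      rw [Nat.add_div_right k two_pos, pow_succ]; ring
    exact ⟨_, hL.cliffordDouble.reindex (finSumFinEquiv.trans (finCongr hr))⟩

theorem stmt_6_general (k m : ℕ) :
    ∃ L : (Fin k → ℝ) →ₗ[ℝ]
        Matrix (Fin (m * 2 ^ ((k - 1) / 2))) (Fin (m * 2 ^ ((k - 1) / 2))) ℂ,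
      ∀ x : Fin k → ℝ, x ≠ 0 → IsUnit (L x) := by
  obtain ⟨L, hL⟩ := exists_isCliffordMap m k
  refine ⟨L, fun x hx => (hL x).isUnit ?_⟩
  simpa [Finset.sum_eq_zero_iff_of_nonneg fun i _ => sq_nonneg (x i), funext_iff] using hx

/-- For positive integers `k` and `m`, there exists a linear map `L : ℝᵏ → M_r(ℂ)` with
`L x` invertible for every `x ≠ 0`, where `r = m * 2 ^ ⌊(k−1)/2⌋`. -/
theorem stmt_6 (k m : ℕ) (hk : 0 < k) (hm : 0 < m) :
    ∃ L : (Fin k → ℝ) →ₗ[ℝ]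
        Matrix (Fin (m * 2 ^ ((k - 1) / 2))) (Fin (m * 2 ^ ((k - 1) / 2))) ℂ,
      ∀ x : Fin k → ℝ, x ≠ 0 → IsUnit (L x) :=
  stmt_6_general k m
end

section
/- Let V be a real Euclidean vector space of odd dimension, 𝕊 the irreducible complex Clifford module with multiplication c⁺ (so that the even Clifford algebra surjects onto End(𝕊)), and W' a Hermitian vector space. On E = (𝕊 ⊗ W') ⊕ (𝕊 ⊗ W') with Clifford action c^E(v) = (c⁺(v) ⊗ 1, −c⁺(v) ⊗ 1) and grading E^± = 𝕊 ⊗ {(w, ±w) : w ∈ W'}, a self-adjoint odd endomorphism Z of E anticommutes with c^E(v) for all v ∈ V if and only if Z = 1 ⊗ [[0, φ],[−φ, 0]] for some skew-adjoint φ ∈ End(W'). -/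
/-!
Oddness forces `Z = [[A, B], [-B, -A]]` on `(𝕊 ⊗ W')²`, and anticommuting with
`c^E(v) = diag(γ v, -γ v)`, `γ v = c⁺(v) ⊗ 1`, says exactly that `A` anticommutes and `B` commutes
with every `γ v`. Either way `A` and `B` commute with the products `γ v γ w`, which generate
`End 𝕊 ⊗ 1`, whose commutant is `1 ⊗ End W'`. So `A = 1 ⊗ ψ` both commutes and anticommutes with
`γ v`, which is invertible for `v ≠ 0` (such `v` exist as `dim V` is odd); hence `A = 0`.
Finally `B = 1 ⊗ φ`, and self-adjointness of `Z` makes `φ` skew-adjoint.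
-/

open scoped RealInnerProductSpace InnerProductSpace TensorProduct

section TensorCommutant

open LinearMap

variable {R M N : Type*} [CommSemiring R] [AddCommMonoid M] [Module R M] [AddCommMonoid N]
  [Module R N]

theorem LinearMap.rTensor_smulRight_apply (e : Module.Dual R M) (s : M) (t : M ⊗[R] N) :
    (smulRight e s).rTensor N t = s ⊗ₜ TensorProduct.lid R N (e.rTensor N t) := by
  induction t using TensorProduct.induction_on with
  | zero => simp
  | tmul x w => simp [TensorProduct.smul_tmul', TensorProduct.tmul_smul]
  | add x y hx hy => simp [hx, hy, TensorProduct.tmul_add]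

theorem LinearMap.commute_lTensor_rTensor (f : Module.End R N) (g : Module.End R M) :
    Commute (f.lTensor M) (g.rTensor N) :=
  (lTensor_comp_rTensor _ g f).trans (rTensor_comp_lTensor _ g f).symm

end TensorCommutant

theorem exists_eq_lTensor_of_forall_commute_rTensor {K M N : Type*} [Field K] [AddCommGroup M]
    [Module K M] [AddCommGroup N] [Module K N] {f : Module.End K (M ⊗[K] N)}
    (hf : ∀ g : Module.End K M, Commute f (g.rTensor N)) :
    ∃ φ : Module.End K N, f = φ.lTensor M := by
  rcases subsingleton_or_nontrivial M with hM | hM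
  · exact ⟨0, LinearMap.ext fun t => Subsingleton.elim _ _⟩
  obtain ⟨s₀, hs₀⟩ := exists_ne (0 : M)
  obtain ⟨e, he⟩ := Module.Projective.exists_dual_eq_one K hs₀
  -- `f (s ⊗ w) = f (P (s₀ ⊗ w)) = P (f (s₀ ⊗ w))` for the rank-one `P = e(·) • s` on `M`
  refine ⟨TensorProduct.lid K N ∘ₗ e.rTensor N ∘ₗ f ∘ₗ TensorProduct.mk K M N s₀,
    TensorProduct.ext' fun s w => ?_⟩
  have := congr($(hf (LinearMap.smulRight e s)) (s₀ ⊗ₜ w))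
  simpa [LinearMap.rTensor_smulRight_apply, he] using this

theorem AlgHom.commute_of_adjoin_eq_top {R A B : Type*} [CommSemiring R] [Semiring A] [Semiring B]
    [Algebra R A] [Algebra R B] (f : A →ₐ[R] B) {s : Set A} (hs : Algebra.adjoin R s = ⊤) {x : B}
    (h : ∀ a ∈ s, Commute x (f a)) (a : A) : Commute x (f a) := by
  have hfa : f a ∈ Algebra.adjoin R (f '' s) := by
    rw [Algebra.adjoin_image, hs]; exact ⟨a, trivial, rfl⟩
  refine Algebra.commute_of_mem_adjoin_of_forall_mem_commute hfa ?_
  rintro _ ⟨b, hb, rfl⟩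
  exact h b hb

theorem commute_mul_of_anticommute {R : Type*} [Ring R] {x a b : R}
    (ha : x * a = -(a * x)) (hb : x * b = -(b * x)) : Commute x (a * b) := by
  change x * (a * b) = a * b * x
  rw [← mul_assoc, ha, neg_mul, mul_assoc, hb, mul_neg, neg_neg, mul_assoc]

theorem eq_zero_of_commute_of_anticommute {K R : Type*} [Field K] [NeZero (2 : K)] [Ring R]
    [Algebra K R] {x a : R} {r : K} (hr : r ≠ 0) (ha : a * a = r • 1) (hcomm : Commute x a)
    (hanti : x * a = -(a * x)) : x = 0 := by
  have hxa : x * a = 0 := by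
    have : (2 : K) • (x * a) = 0 := by
      rw [two_smul]; nth_rewrite 2 [hcomm.eq]; rw [hanti, neg_add_cancel]
    simpa [two_ne_zero] using this
  have : r • x = 0 := by rw [← mul_smul_one, ← ha, ← mul_assoc, hxa, zero_mul]
  simpa [hr] using this

section OddBlock

open LinearMap

variable {R M : Type*} [CommRing R] [AddCommGroup M] [Module R M]

/-- The block matrix `[[A, B], [-B, -A]]` acting on `M × M`. -/
def oddBlock (A B : Module.End R M) : Module.End R (M × M) :=
  (A.prod (-B)).coprod (B.prod (-A))

@[simp]
theorem oddBlock_apply (A B : Module.End R M) (p : M × M) :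
    oddBlock A B p = (A p.1 + B p.2, -B p.1 - A p.2) := by
  simp [oddBlock, sub_eq_add_neg]

theorem oddBlock_comp_add_comp_eq_zero_iff (A B g : Module.End R M) :
    oddBlock A B ∘ₗ g.prodMap (-g) + g.prodMap (-g) ∘ₗ oddBlock A B = 0 ↔
      A * g = -(g * A) ∧ Commute B g := by
  have key : ∀ a b : M,
      (oddBlock A B ∘ₗ g.prodMap (-g) + g.prodMap (-g) ∘ₗ oddBlock A B) (a, b) =
        ((A * g + g * A) a + (g * B - B * g) b, (g * B - B * g) a + (A * g + g * A) b) := by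
    intro a b
    simp only [LinearMap.add_apply, comp_apply, prodMap_apply, oddBlock_apply, LinearMap.neg_apply,
      LinearMap.sub_apply, Module.End.mul_apply, map_add, map_sub, map_neg, Prod.mk_add_mk]
    congr 1 <;> abel
  constructor
  · intro h
    have h₁ : ∀ a, (A * g + g * A) a = 0 ∧ (g * B - B * g) a = 0 := fun a => by
      simpa [key] using congr($h (a, 0))
    refine ⟨eq_neg_of_add_eq_zero_left (ext fun a => (h₁ a).1),
      (sub_eq_zero.mp (ext fun a => (h₁ a).2)).symm⟩
  · rintro ⟨hA, hB⟩
    refine ext fun ⟨a, b⟩ => ?_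
    simp [key, hA, hB.eq]

variable {K M : Type*} [Field K] [NeZero (2 : K)] [AddCommGroup M] [Module K M]

theorem exists_eq_oddBlock {Z : Module.End K (M × M)}
    (h₁ : ∀ t, (Z (t, t)).2 = -(Z (t, t)).1) (h₂ : ∀ t, (Z (t, -t)).2 = (Z (t, -t)).1) :
    ∃ A B : Module.End K M, Z = oddBlock A B := by
  have hsplit : ∀ a b : M, Z (a, b) = Z (a, 0) + Z (0, b) := fun a b => by
    rw [← map_add, Prod.mk_add_mk, add_zero, zero_add]
  have hneg : ∀ t : M, Z (0, -t) = -Z (0, t) := fun t => by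
    rw [← map_neg, Prod.neg_mk, neg_zero]
  have hoff : ∀ t : M, (Z (t, 0)).2 = -(Z (0, t)).1 ∧ (Z (0, t)).2 = -(Z (t, 0)).1 := by
    intro t
    have e₁ := h₁ t
    have e₂ := h₂ t
    rw [hsplit] at e₁
    rw [hsplit, hneg] at e₂
    simp only [Prod.fst_add, Prod.snd_add, Prod.fst_neg, Prod.snd_neg] at e₁ e₂
    constructor <;> apply smul_right_injective M (two_ne_zero (α := K))
    · linear_combination (norm := module) e₁ + e₂
    · linear_combination (norm := module) e₁ - e₂
  refine ⟨fst K M M ∘ₗ Z ∘ₗ inl K M M, fst K M M ∘ₗ Z ∘ₗ inr K M M, ext fun ⟨a, b⟩ => ?_⟩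
  rw [hsplit, oddBlock_apply]
  ext
  · simp
  · simp [(hoff a).1, (hoff b).2, sub_eq_add_neg]

end OddBlock

theorem inner_map_eq_neg_of_lTensor {𝕜 S W : Type*} [RCLike 𝕜]
    [NormedAddCommGroup S] [InnerProductSpace 𝕜 S] [Nontrivial S]
    [NormedAddCommGroup W] [InnerProductSpace 𝕜 W]
    [NormedAddCommGroup (S ⊗[𝕜] W)] [InnerProductSpace 𝕜 (S ⊗[𝕜] W)]
    (hinner : ∀ (s₁ s₂ : S) (w₁ w₂ : W),
      ⟪s₁ ⊗ₜ[𝕜] w₁, s₂ ⊗ₜ[𝕜] w₂⟫_𝕜 = ⟪s₁, s₂⟫_𝕜 * ⟪w₁, w₂⟫_𝕜)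
    {φ : Module.End 𝕜 W} (h : ∀ t t', ⟪-φ.lTensor S t, t'⟫_𝕜 = ⟪t, φ.lTensor S t'⟫_𝕜)
    (w w' : W) : ⟪φ w, w'⟫_𝕜 = -⟪w, φ w'⟫_𝕜 := by
  obtain ⟨s, hs⟩ := exists_ne (0 : S)
  have := h (s ⊗ₜ w) (s ⊗ₜ w')
  rw [LinearMap.lTensor_tmul, LinearMap.lTensor_tmul, ← TensorProduct.neg_tmul, hinner, hinner, inner_neg_left,
    neg_mul, neg_eq_iff_eq_neg, ← mul_neg] at this
  exact mul_left_cancel₀ (inner_self_ne_zero.mpr hs) this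

theorem stmt_16_general {V : Type*} [NormedAddCommGroup V] [InnerProductSpace ℝ V]
    (hodd : Odd (Module.finrank ℝ V))
    {𝕊 : Type*} [NormedAddCommGroup 𝕊] [InnerProductSpace ℂ 𝕊]
    {W' : Type*} [NormedAddCommGroup W'] [InnerProductSpace ℂ W']
    [NormedAddCommGroup (𝕊 ⊗[ℂ] W')] [InnerProductSpace ℂ (𝕊 ⊗[ℂ] W')]
    (c : V →ₗ[ℝ] (𝕊 →ₗ[ℂ] 𝕊))
    (hc : ∀ v : V, c v * c v = ((-‖v‖ ^ 2 : ℝ) : ℂ) • 1)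
    (hsurj : Algebra.adjoin ℂ {g : 𝕊 →ₗ[ℂ] 𝕊 | ∃ v w : V, g = c v * c w} = ⊤)
    (hinner : ∀ (s₁ s₂ : 𝕊) (w₁ w₂ : W'),
      ⟪s₁ ⊗ₜ[ℂ] w₁, s₂ ⊗ₜ[ℂ] w₂⟫_ℂ = ⟪s₁, s₂⟫_ℂ * ⟪w₁, w₂⟫_ℂ)
    (Z : ((𝕊 ⊗[ℂ] W') × (𝕊 ⊗[ℂ] W')) →ₗ[ℂ] ((𝕊 ⊗[ℂ] W') × (𝕊 ⊗[ℂ] W')))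
    (hZsa : ∀ p q : (𝕊 ⊗[ℂ] W') × (𝕊 ⊗[ℂ] W'),
      ⟪(Z p).1, q.1⟫_ℂ + ⟪(Z p).2, q.2⟫_ℂ = ⟪p.1, (Z q).1⟫_ℂ + ⟪p.2, (Z q).2⟫_ℂ)
    (hZodd₁ : ∀ t : 𝕊 ⊗[ℂ] W', (Z (t, t)).2 = -(Z (t, t)).1)
    (hZodd₂ : ∀ t : 𝕊 ⊗[ℂ] W', (Z (t, -t)).2 = (Z (t, -t)).1) :
    (∀ v : V,
      Z ∘ₗ LinearMap.prodMap (LinearMap.rTensor W' (c v)) (-(LinearMap.rTensor W' (c v)))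
        + LinearMap.prodMap (LinearMap.rTensor W' (c v)) (-(LinearMap.rTensor W' (c v)))
          ∘ₗ Z = 0) ↔
    (∃ φ : W' →ₗ[ℂ] W', (∀ w w' : W', ⟪φ w, w'⟫_ℂ = -⟪w, φ w'⟫_ℂ) ∧
      ∀ p : (𝕊 ⊗[ℂ] W') × (𝕊 ⊗[ℂ] W'),
        Z p = (LinearMap.lTensor 𝕊 φ p.2, -(LinearMap.lTensor 𝕊 φ p.1))) := by
  let ρ := Module.End.rTensorAlgHom ℂ 𝕊 W'
  obtain ⟨A, B, rfl⟩ := exists_eq_oddBlock hZodd₁ hZodd₂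
  simp only [oddBlock_comp_add_comp_eq_zero_iff]
  constructor
  · intro H
    rcases subsingleton_or_nontrivial 𝕊 with h𝕊 | h𝕊
    · exact ⟨0, by simp, fun p => Subsingleton.elim _ _⟩
    have hB := ρ.commute_of_adjoin_eq_top hsurj <| by
      rintro _ ⟨v, w, rfl⟩
      rw [map_mul]
      exact (H v).2.mul_right (H w).2
    have hA := ρ.commute_of_adjoin_eq_top hsurj <| by
      rintro _ ⟨v, w, rfl⟩
      rw [map_mul]
      exact commute_mul_of_anticommute (H v).1 (H w).1
    obtain ⟨φ, rfl⟩ := exists_eq_lTensor_of_forall_commute_rTensor hB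
    obtain ⟨ψ, rfl⟩ := exists_eq_lTensor_of_forall_commute_rTensor hA
    have : Nontrivial V := Module.nontrivial_of_finrank_pos hodd.pos
    obtain ⟨v, hv⟩ := exists_ne (0 : V)
    have hψ : ψ.lTensor 𝕊 = 0 := by
      refine eq_zero_of_commute_of_anticommute (a := ρ (c v)) (r := ((-‖v‖ ^ 2 : ℝ) : ℂ))
        (by simpa using hv) (by rw [← map_mul, hc, map_smul, map_one])
        (LinearMap.commute_lTensor_rTensor ψ (c v)) (H v).1
    refine ⟨φ, inner_map_eq_neg_of_lTensor hinner fun t t' => ?_, fun p => by simp [hψ]⟩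
    -- The inner product on `𝕊 ⊗ W'` comes with its own additive structure, unrelated to the tensor
    -- product's, so the tensor zero in `⟪0, 0⟫` does not vanish and is cancelled instead.
    have := hZsa (t, 0) (0, t')
    simp only [hψ, oddBlock_apply, LinearMap.zero_apply, map_zero, add_zero, sub_zero, zero_add,
      neg_zero, sub_self] at this
    exact add_left_cancel (this.trans (add_comm _ _))
  · rintro ⟨φ, -, hZ⟩ v
    have hA : A = 0 := LinearMap.ext fun a => by simpa using congr_arg Prod.fst (hZ (a, 0))
    have hB : B = φ.lTensor 𝕊 := LinearMap.ext fun b => by simpa using congr_arg Prod.fst (hZ (0, b))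
    subst hA hB
    exact ⟨by simp, LinearMap.commute_lTensor_rTensor φ (c v)⟩

/-- Let `V` be an odd-dimensional Euclidean space, `𝕊` the irreducible complex Clifford
module with multiplication `c⁺` (so `c⁺(v)² = −‖v‖²`, `c⁺(v)` is skew-adjoint, and the even
Clifford algebra — generated by the products `c⁺(v)c⁺(w)` — is all of `End 𝕊`), and `W'` a
Hermitian space.  On `E = (𝕊 ⊗ W') ⊕ (𝕊 ⊗ W')` with Clifford action
`c^E(v) = (c⁺(v) ⊗ 1, −c⁺(v) ⊗ 1)` and grading `E^± = 𝕊 ⊗ {(w, ±w)}`, a self-adjoint odd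
endomorphism `Z` anticommutes with every `c^E(v)` iff `Z = 1 ⊗ [[0, φ], [−φ, 0]]` for some
skew-adjoint `φ : W' → W'`, i.e. `Z (a, b) = ((1⊗φ) b, −(1⊗φ) a)`. -/
theorem stmt_16 {V : Type*} [NormedAddCommGroup V] [InnerProductSpace ℝ V]
    [FiniteDimensional ℝ V] (hodd : Odd (Module.finrank ℝ V))
    {𝕊 : Type*} [NormedAddCommGroup 𝕊] [InnerProductSpace ℂ 𝕊] [FiniteDimensional ℂ 𝕊]
    {W' : Type*} [NormedAddCommGroup W'] [InnerProductSpace ℂ W'] [FiniteDimensional ℂ W']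
    [NormedAddCommGroup (𝕊 ⊗[ℂ] W')] [InnerProductSpace ℂ (𝕊 ⊗[ℂ] W')]
    (c : V →ₗ[ℝ] (𝕊 →ₗ[ℂ] 𝕊))
    (hc : ∀ v : V, c v * c v = ((-‖v‖ ^ 2 : ℝ) : ℂ) • 1)
    (hskew : ∀ (v : V) (x y : 𝕊), ⟪c v x, y⟫_ℂ = -⟪x, c v y⟫_ℂ)
    (hsurj : Algebra.adjoin ℂ {g : 𝕊 →ₗ[ℂ] 𝕊 | ∃ v w : V, g = c v * c w} = ⊤)
    (hinner : ∀ (s₁ s₂ : 𝕊) (w₁ w₂ : W'),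
      ⟪s₁ ⊗ₜ[ℂ] w₁, s₂ ⊗ₜ[ℂ] w₂⟫_ℂ = ⟪s₁, s₂⟫_ℂ * ⟪w₁, w₂⟫_ℂ)
    (Z : ((𝕊 ⊗[ℂ] W') × (𝕊 ⊗[ℂ] W')) →ₗ[ℂ] ((𝕊 ⊗[ℂ] W') × (𝕊 ⊗[ℂ] W')))
    (hZsa : ∀ p q : (𝕊 ⊗[ℂ] W') × (𝕊 ⊗[ℂ] W'),
      ⟪(Z p).1, q.1⟫_ℂ + ⟪(Z p).2, q.2⟫_ℂ = ⟪p.1, (Z q).1⟫_ℂ + ⟪p.2, (Z q).2⟫_ℂ)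
    (hZodd₁ : ∀ t : 𝕊 ⊗[ℂ] W', (Z (t, t)).2 = -(Z (t, t)).1)
    (hZodd₂ : ∀ t : 𝕊 ⊗[ℂ] W', (Z (t, -t)).2 = (Z (t, -t)).1) :
    (∀ v : V,
      Z ∘ₗ LinearMap.prodMap (LinearMap.rTensor W' (c v)) (-(LinearMap.rTensor W' (c v)))
        + LinearMap.prodMap (LinearMap.rTensor W' (c v)) (-(LinearMap.rTensor W' (c v)))
          ∘ₗ Z = 0) ↔
    (∃ φ : W' →ₗ[ℂ] W', (∀ w w' : W', ⟪φ w, w'⟫_ℂ = -⟪w, φ w'⟫_ℂ) ∧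
      ∀ p : (𝕊 ⊗[ℂ] W') × (𝕊 ⊗[ℂ] W'),
        Z p = (LinearMap.lTensor 𝕊 φ p.2, -(LinearMap.lTensor 𝕊 φ p.1))) :=
  stmt_16_general hodd c hc hsurj hinner Z hZsa hZodd₁ hZodd₂
end
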